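/- Let n ≥ 2 be an integer, (X,{f_1,…,f_{n−1}}) an l_nP-space, and Y a nonempty subset of X. Then the following are equivalent: (i) Y is semimodal (f_i(Y) ⊆ Y for all 1 ≤ i ≤ n−1); (ii) Y is modal (f_i^{-1}(Y) = Y for all 1 ≤ i ≤ n−1); (iii) Y is a cardinal sum of maximal chains of X, i.e. Y is a union of sets of the form {f_i(x) : 1 ≤ i ≤ n−1}, each of which is a maximal chain in X. -/
import Mathlib


/-- The axioms of an `l_θP`-space except the density axiom (lP6):
`X` is assumed to be a Priestley space (via `[CompactSpace X]` and
`[PriestleySpace X]`), each `f i` is continuous, `x ≤ y` implies `f i x = f i y`,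
`i ≤ j` implies `f i x ≤ f j x`, and `f i ∘ f j = f i`. -/
structure IsLPSpaceAux {I X : Type*} [LinearOrder I] [PartialOrder X] [TopologicalSpace X]
    (f : I → X → X) : Prop where
  continuous : ∀ i, Continuous (f i)
  eq_of_le : ∀ (i : I) ⦃x y : X⦄, x ≤ y → f i x = f i y
  mono : ∀ ⦃i j : I⦄, i ≤ j → ∀ x, f i x ≤ f j x
  comp : ∀ i j x, f i (f j x) = f i x

/-- An `l_θP`-space: the above axioms together with density of `⋃ i, f i (X)`. -/
structure IsLPSpace {I X : Type*} [LinearOrder I] [PartialOrder X] [TopologicalSpace X]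
    (f : I → X → X) extends IsLPSpaceAux f : Prop where
  dense : Dense (⋃ i, Set.range (f i))

/-- `Y` is semimodal if `f i '' Y ⊆ Y` for all `i`. -/
def Semimodal {I X : Type*} (f : I → X → X) (Y : Set X) : Prop := ∀ i, f i '' Y ⊆ Y

/-- `Y` is modal if `f i ⁻¹' Y = Y` for all `i`. -/
def Modal {I X : Type*} (f : I → X → X) (Y : Set X) : Prop := ∀ i, f i ⁻¹' Y = Y

/-- `Y` is a θ-subset if `⋃ i, f i '' Y ⊆ Y ⊆ closure (⋃ i, f i '' Y)`. -/
def ThetaSubset {I X : Type*} [TopologicalSpace X] (f : I → X → X) (Y : Set X) : Prop :=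
  (⋃ i, f i '' Y) ⊆ Y ∧ Y ⊆ closure (⋃ i, f i '' Y)


/-- for a nonempty subset `Y` of an l_nP-space: `Y` is semimodal iff `Y` is
modal iff `Y` is a union of sets `{f i x : i}`, each being a maximal chain of `X`. -/
theorem stmt7 {X : Type*} [PartialOrder X] [TopologicalSpace X] [CompactSpace X]
    [PriestleySpace X] (n : ℕ) (hn : 2 ≤ n) (f : Fin (n - 1) → X → X)
    (hf : IsLPSpace f) (Y : Set X) (hY : Y.Nonempty) :
    List.TFAE
      [ Semimodal f Y,
        Modal f Y,
        ∃ S : Set X, Y = (⋃ x ∈ S, {y | ∃ i, y = f i x}) ∧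
          ∀ x ∈ S, IsMaxChain (· ≤ ·) {y | ∃ i, y = f i x} ] := by

  -- Key fact: every point of `X` is a fixed point of some `f i`.
  have hI : Nonempty (Fin (n - 1)) := ⟨⟨0, by omega⟩⟩
  have key : ∀ x : X, ∃ i, f i x = x := by
    intro x
    have hcl : IsClosed (⋃ i, Set.range (f i)) :=
      isClosed_iUnion_of_finite fun i => (isCompact_range (hf.continuous i)).isClosed
    have huniv : (⋃ i, Set.range (f i)) = Set.univ := by
      rw [← hcl.closure_eq]; exact hf.dense.closure_eq
    have hx : x ∈ ⋃ i, Set.range (f i) := huniv ▸ Set.mem_univ x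
    obtain ⟨_, ⟨i, rfl⟩, y, rfl⟩ := hx
    exact ⟨i, hf.comp i i y⟩
  tfae_have 1 → 2 := by
    intro hsemi i
    ext y
    constructor
    · intro hy
      obtain ⟨j, hj⟩ := key y
      have : f j (f i y) ∈ Y := hsemi j ⟨f i y, hy, rfl⟩
      rwa [hf.comp, hj] at this
    · intro hy
      exact hsemi i ⟨y, hy, rfl⟩
  tfae_have 2 → 3 := by
    intro hmod
    refine ⟨Y, ?_, ?_⟩
    · ext z
      simp only [Set.mem_iUnion, Set.mem_setOf_eq]
      constructor
      · intro hz
        obtain ⟨i, hi⟩ := key z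
        exact ⟨z, hz, i, hi.symm⟩
      · rintro ⟨x, hx, i, rfl⟩
        have := (hmod i) ▸ hx
        exact this
    · intro x _
      constructor
      · rintro a ⟨i, rfl⟩ b ⟨j, rfl⟩ _
        rcases le_total i j with h | h
        · exact Or.inl (hf.mono h x)
        · exact Or.inr (hf.mono h x)
      · intro t ht hsub
        refine Set.Subset.antisymm hsub fun z hz => ?_
        obtain ⟨j, hj⟩ := key z
        have hfx : f j x ∈ t := hsub ⟨j, rfl⟩
        by_cases hne : z = f j x
        · exact ⟨j, hne⟩
        · rcases ht hz hfx hne with h | h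
          · refine ⟨j, ?_⟩
            have := hf.eq_of_le j h
            rw [hj, hf.comp] at this
            exact this
          · refine ⟨j, ?_⟩
            have := hf.eq_of_le j h
            rw [hj, hf.comp] at this
            exact this.symm
  tfae_have 3 → 1 := by
    rintro ⟨S, rfl, _⟩ i _ ⟨y, hy, rfl⟩
    simp only [Set.mem_iUnion, Set.mem_setOf_eq] at hy ⊢
    obtain ⟨x, hx, j, rfl⟩ := hy
    exact ⟨x, hx, i, hf.comp i j x⟩
  tfae_finish
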